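/- arXiv:2509.13661 — 2 statements merged into one kernel-verified Lean document; each statement's English description precedes it below -/
import Mathlib

section
/- Let M be an invertible real K×K matrix with M⁻¹ ≥ 0 entrywise, ω ∈ ℝ^K with ωᵀM⁻¹ ≥ 0 entrywise, and σ² > 0. Then the minimum of σ²·𝟏ᵀq over {q ∈ ℝ^K : Mᵀq ≥ ω, q ≥ 0} equals σ²·𝟏ᵀ(M⁻ᵀω), attained at q* = M⁻ᵀω; moreover σ²·𝟏ᵀM⁻ᵀω = σ²·ωᵀM⁻¹𝟏. -/
open Matrix

/-- With `M⁻¹ ≥ 0` entrywise and `M⁻ᵀω ≥ 0`, the minimum of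
`σ²·𝟏ᵀq` over `{q : Mᵀq ≥ ω, q ≥ 0}` equals `σ²·𝟏ᵀ(M⁻ᵀω)`, attained at
`q* = M⁻ᵀω`; moreover `σ²·𝟏ᵀM⁻ᵀω = σ²·ωᵀM⁻¹𝟏`. -/
theorem stmt_8 {K : ℕ} (M : Matrix (Fin K) (Fin K) ℝ) (hM : IsUnit M)
    (hMinv : ∀ i j, 0 ≤ M⁻¹ i j) (ω : Fin K → ℝ)
    (hω : ∀ i, 0 ≤ ((M⁻¹)ᵀ *ᵥ ω) i) (σ2 : ℝ) (hσ : 0 < σ2) :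
    IsLeast {y : ℝ | ∃ q : Fin K → ℝ, (∀ k, ω k ≤ (Mᵀ *ᵥ q) k) ∧
        (∀ k, 0 ≤ q k) ∧ y = σ2 * ((1 : Fin K → ℝ) ⬝ᵥ q)}
      (σ2 * ((1 : Fin K → ℝ) ⬝ᵥ ((M⁻¹)ᵀ *ᵥ ω))) ∧
    σ2 * ((1 : Fin K → ℝ) ⬝ᵥ ((M⁻¹)ᵀ *ᵥ ω))
      = σ2 * (ω ⬝ᵥ (M⁻¹ *ᵥ (1 : Fin K → ℝ))) := by
  have hinv : M⁻¹ * M = 1 := nonsing_inv_mul M ((isUnit_iff_isUnit_det M).mp hM)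
  have hinv2 : M * M⁻¹ = 1 := mul_nonsing_inv M ((isUnit_iff_isUnit_det M).mp hM)
  have hTT : Mᵀ *ᵥ ((M⁻¹)ᵀ *ᵥ ω) = ω := by
    rw [mulVec_mulVec, ← transpose_mul, hinv, transpose_one, one_mulVec]
  constructor
  · constructor
    · exact ⟨(M⁻¹)ᵀ *ᵥ ω, fun k => by rw [hTT], hω, rfl⟩
    · rintro y ⟨q, hq1, hq2, rfl⟩
      have key : ∀ i, ((M⁻¹)ᵀ *ᵥ ω) i ≤ q i := by
        intro i
        have : ((M⁻¹)ᵀ *ᵥ (Mᵀ *ᵥ q)) i = q i := by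
          rw [mulVec_mulVec, ← transpose_mul, hinv2, transpose_one, one_mulVec]
        rw [← this]
        simp only [mulVec, dotProduct]
        apply Finset.sum_le_sum
        intro j _
        exact mul_le_mul_of_nonneg_left (hq1 j) (by simpa using hMinv j i)
      apply mul_le_mul_of_nonneg_left _ hσ.le
      simp only [dotProduct, Pi.one_apply, one_mul]
      exact Finset.sum_le_sum fun i _ => key i
  · rw [dotProduct_mulVec, vecMul_transpose, dotProduct_comm]
end

section
/- Uplink-downlink power duality: let M be an invertible real K×K matrix with M⁻¹ ≥ 0 entrywise, ω ∈ ℝ^K with ωᵀM⁻¹ ≥ 0 entrywise, and σ² > 0. Then the optimal downlink value min{ωᵀp : Mp ≥ σ²𝟏, p ≥ 0} equals the optimal uplink value min{σ²·𝟏ᵀq : Mᵀq ≥ ω, q ≥ 0}, and both equal σ²·ωᵀM⁻¹𝟏. -/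
open Matrix

/-- Uplink-downlink power duality: the optimal downlink value
`min{ωᵀp : Mp ≥ σ²𝟏, p ≥ 0}` and the optimal uplink value
`min{σ²𝟏ᵀq : Mᵀq ≥ ω, q ≥ 0}` both equal `σ²·ωᵀM⁻¹𝟏`. -/
theorem stmt_9 {K : ℕ} (M : Matrix (Fin K) (Fin K) ℝ) (hM : IsUnit M)
    (hMinv : ∀ i j, 0 ≤ M⁻¹ i j) (ω : Fin K → ℝ)
    (hω : ∀ j, 0 ≤ (ω ᵥ* M⁻¹) j) (σ2 : ℝ) (hσ : 0 < σ2) :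
    IsLeast {y : ℝ | ∃ p : Fin K → ℝ, (∀ k, σ2 ≤ (M *ᵥ p) k) ∧
        (∀ k, 0 ≤ p k) ∧ y = ω ⬝ᵥ p}
      (σ2 * (ω ⬝ᵥ (M⁻¹ *ᵥ (1 : Fin K → ℝ)))) ∧
    IsLeast {y : ℝ | ∃ q : Fin K → ℝ, (∀ k, ω k ≤ (Mᵀ *ᵥ q) k) ∧
        (∀ k, 0 ≤ q k) ∧ y = σ2 * ((1 : Fin K → ℝ) ⬝ᵥ q)}
      (σ2 * (ω ⬝ᵥ (M⁻¹ *ᵥ (1 : Fin K → ℝ)))) := by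
  have hdet : IsUnit M.det := (Matrix.isUnit_iff_isUnit_det M).mp hM
  have hMiM : M⁻¹ * M = 1 := Matrix.nonsing_inv_mul M hdet
  have hMMi : M * M⁻¹ = 1 := Matrix.mul_nonsing_inv M hdet
  have hMx : M *ᵥ (σ2 • (M⁻¹ *ᵥ (1 : Fin K → ℝ))) = σ2 • (1 : Fin K → ℝ) := by
    rw [Matrix.mulVec_smul, Matrix.mulVec_mulVec, hMMi, Matrix.one_mulVec]
  have hinv1 : ∀ j, 0 ≤ (M⁻¹ *ᵥ (1 : Fin K → ℝ)) j := by
    intro j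
    simp only [Matrix.mulVec, dotProduct]
    exact Finset.sum_nonneg fun i _ => mul_nonneg (hMinv j i) (by norm_num)
  constructor
  · constructor
    · refine ⟨σ2 • (M⁻¹ *ᵥ (1 : Fin K → ℝ)), ?_, ?_, ?_⟩
      · intro k
        rw [hMx]; simp
      · intro k
        exact smul_nonneg hσ.le (hinv1 k)
      · rw [dotProduct_smul, smul_eq_mul]
    · rintro y ⟨p, hp1, hp2, rfl⟩
      have key : ω ⬝ᵥ p = (ω ᵥ* M⁻¹) ⬝ᵥ (M *ᵥ p) := by
        rw [Matrix.dotProduct_mulVec, Matrix.vecMul_vecMul, hMiM, Matrix.vecMul_one]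
      have key2 : σ2 * (ω ⬝ᵥ (M⁻¹ *ᵥ (1 : Fin K → ℝ))) =
          (ω ᵥ* M⁻¹) ⬝ᵥ (σ2 • (1 : Fin K → ℝ)) := by
        rw [Matrix.dotProduct_mulVec, dotProduct_smul, smul_eq_mul]
      rw [key, key2]
      refine Finset.sum_le_sum fun j _ => ?_
      have : (σ2 • (1 : Fin K → ℝ)) j ≤ (M *ᵥ p) j := by simpa using hp1 j
      exact mul_le_mul_of_nonneg_left this (hω j)
  · constructor
    · refine ⟨ω ᵥ* M⁻¹, ?_, hω, ?_⟩
      · intro k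
        have : Mᵀ *ᵥ (ω ᵥ* M⁻¹) = ω := by
          rw [← Matrix.vecMul_transpose, Matrix.transpose_transpose,
            Matrix.vecMul_vecMul, hMiM, Matrix.vecMul_one]
        rw [this]
      · congr 1
        rw [Matrix.dotProduct_mulVec, dotProduct_comm]
    · rintro y ⟨q, hq1, hq2, rfl⟩
      have key : σ2 * ((1 : Fin K → ℝ) ⬝ᵥ q) = (M *ᵥ (σ2 • (M⁻¹ *ᵥ 1))) ⬝ᵥ q := by
        rw [hMx, smul_dotProduct, smul_eq_mul]
      have key2 : σ2 * (ω ⬝ᵥ (M⁻¹ *ᵥ (1 : Fin K → ℝ))) =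
          (σ2 • (M⁻¹ *ᵥ (1 : Fin K → ℝ))) ⬝ᵥ ω := by
        rw [smul_dotProduct, dotProduct_comm, smul_eq_mul]
      have key3 : (M *ᵥ (σ2 • (M⁻¹ *ᵥ 1))) ⬝ᵥ q = (σ2 • (M⁻¹ *ᵥ 1)) ⬝ᵥ (Mᵀ *ᵥ q) := by
        rw [Matrix.dotProduct_mulVec, ← Matrix.vecMul_transpose]
      rw [key, key2, key3]
      refine Finset.sum_le_sum fun j _ => ?_
      exact mul_le_mul_of_nonneg_left (hq1 j) (smul_nonneg hσ.le (hinv1 j))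
end
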